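/- arXiv:2307.15648 — 6 statements merged into one kernel-verified Lean document; each statement's English description precedes it below -/
import Mathlib

section
/- Suppose groups G and G′ both have order v and possess regular Paley-type (v,(v−1)/2,(v−5)/4,(v−1)/4)-PDSs D and D′ respectively. Then the set 𝒟 = {(d, 1) : d ∈ D} ∪ {(d, d′) : d ∈ D, d′ ∈ D′} ∪ {(e, 1) : e ∈ D^c} ∪ {(e, e′) : e ∈ D^c, e′ ∈ D′^c} is a regular Paley-type (v², (v²−1)/2, (v²−5)/4, (v²−1)/4)-PDS in G × G′, where D^c = G − 1 − D and D′^c = G′ − 1 − D′. -/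
open Finset

/-!
Write `N(A, B)(x)` for the number of pairs `(a, b) ∈ A × B` with `a * b⁻¹ = x`, and `E = Dᶜ`.
For a Paley-type PDS in a group of order `4m + 1`, counting `N(D, G)(x) = |D|` over the partition
`G = {1} ⊔ D ⊔ E` gives `N(D, E)(x) = m` for `x ≠ 1` and shows that `E` is again of Paley type.
Since `𝒟 = D × ({1} ∪ D') ⊔ E × ({1} ∪ E')` and `N` is additive in each argument and multiplicative
on products, `N(𝒟, 𝒟)(x, y)` is a sum of four products of these values; checking the three classes
`1`, `D`, `E` of `x` and of `y` gives `λ = 4m² + 2m - 1` and `μ = 4m² + 2m`.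
-/

/-- Number of ways to write `x` as `d₁ * d₂⁻¹` with `d₁, d₂ ∈ D`. -/
def pdsCount {G : Type*} [Group G] [Fintype G] [DecidableEq G] (D : Finset G) (x : G) : ℕ :=
  ((D ×ˢ D).filter (fun p => p.1 * p.2⁻¹ = x)).card

/-- `D` is a regular `(v,k,λ,μ)`-partial difference set in `G`. -/
def IsRegularPDS {G : Type*} [Group G] [Fintype G] [DecidableEq G]
    (D : Finset G) (v k l m : ℤ) : Prop :=
  (Fintype.card G : ℤ) = v ∧ (D.card : ℤ) = k ∧ (1 : G) ∉ D ∧ (∀ d ∈ D, d⁻¹ ∈ D) ∧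
  (∀ x ∈ D, (pdsCount D x : ℤ) = l) ∧
  (∀ x : G, x ≠ 1 → x ∉ D → (pdsCount D x : ℤ) = m)

section DiffCount

variable {H K : Type*} [Group H] [DecidableEq H] [Group K] [DecidableEq K]

def diffCount (A B : Finset H) (x : H) : ℕ :=
  #{p ∈ A ×ˢ B | p.1 * p.2⁻¹ = x}

theorem pdsCount_eq_diffCount [Fintype H] (D : Finset H) (x : H) :
    pdsCount D x = diffCount D D x :=
  rfl

theorem diffCount_union_left {A A' : Finset H} (h : Disjoint A A') (B : Finset H) (x : H) :
    diffCount (A ∪ A') B x = diffCount A B x + diffCount A' B x := by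
  rw [diffCount, union_product, filter_union,
    card_union_of_disjoint (disjoint_filter_filter (disjoint_product.2 (Or.inl h)))]
  rfl

theorem diffCount_union_right (A : Finset H) {B B' : Finset H} (h : Disjoint B B') (x : H) :
    diffCount A (B ∪ B') x = diffCount A B x + diffCount A B' x := by
  rw [diffCount, product_union, filter_union,
    card_union_of_disjoint (disjoint_filter_filter (disjoint_product.2 (Or.inr h)))]
  rfl

theorem diffCount_product (A B : Finset H) (S T : Finset K) (x : H) (y : K) :
    diffCount (A ×ˢ S) (B ×ˢ T) (x, y) = diffCount A B x * diffCount S T y := by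
  rw [diffCount, diffCount, diffCount, ← card_product]
  refine card_nbij' (fun p => ((p.1.1, p.2.1), (p.1.2, p.2.2)))
    (fun p => ((p.1.1, p.2.1), (p.1.2, p.2.2))) ?_ ?_ (fun _ _ => rfl) (fun _ _ => rfl) <;>
  · intro p hp
    simp only [mem_coe, mem_filter, mem_product, Prod.ext_iff, Prod.fst_mul,
      Prod.snd_mul, Prod.fst_inv, Prod.snd_inv] at hp ⊢
    tauto

theorem diffCount_swap (A B : Finset H) (x : H) : diffCount A B x = diffCount B A x⁻¹ := by
  refine card_nbij' Prod.swap Prod.swap ?_ ?_ (fun _ _ => rfl) (fun _ _ => rfl) <;>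
  · intro p hp
    simp only [mem_coe, mem_filter, mem_product, Prod.fst_swap, Prod.snd_swap] at hp ⊢
    exact ⟨hp.1.symm, by simpa using congrArg (·⁻¹) hp.2⟩

theorem diffCount_self_one (A : Finset H) : diffCount A A 1 = #A := by
  rw [diffCount, ← diag_card A]
  congr 1
  ext p
  simp only [mem_filter, mem_product, mem_diag, mul_inv_eq_one]
  grind

theorem diffCount_univ_right [Fintype H] (A : Finset H) (x : H) : diffCount A univ x = #A := by
  refine card_nbij' Prod.fst (fun a => (a, x⁻¹ * a)) ?_ ?_ ?_ (fun _ _ => rfl)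
  · intro p hp
    simp only [mem_coe, mem_filter, mem_product] at hp
    exact hp.1.1
  · intro a ha
    simpa using ha
  · intro p hp
    simp only [mem_coe, mem_filter] at hp
    rw [← hp.2]
    ext <;> simp

theorem diffCount_singleton_one_right (A : Finset H) (x : H) :
    diffCount A {1} x = if x ∈ A then 1 else 0 := by
  split_ifs with hx
  · rw [diffCount, card_eq_one]
    refine ⟨(x, 1), ?_⟩
    ext ⟨a, b⟩
    simp only [mem_filter, mem_product, mem_singleton, Prod.mk.injEq]
    constructor
    · rintro ⟨⟨-, rfl⟩, rfl⟩
      simp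
    · rintro ⟨rfl, rfl⟩
      simpa using hx
  · rw [diffCount, card_eq_zero, filter_eq_empty_iff]
    simp only [mem_product, mem_singleton]
    rintro ⟨a, b⟩ ⟨ha, rfl⟩
    simpa using ne_of_mem_of_not_mem ha hx

theorem diffCount_singleton_one_left (B : Finset H) (x : H) :
    diffCount {1} B x = if x⁻¹ ∈ B then 1 else 0 := by
  rw [diffCount_swap, diffCount_singleton_one_right]

theorem diffCount_insert_one_right (A : Finset H) {B : Finset H} (hB : 1 ∉ B) (x : H) :
    diffCount A (insert 1 B) x = (if x ∈ A then 1 else 0) + diffCount A B x := by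
  rw [insert_eq, diffCount_union_right A (disjoint_singleton_left.2 hB),
    diffCount_singleton_one_right]

theorem diffCount_insert_one_left {A : Finset H} (hA : 1 ∉ A) (B : Finset H) (x : H) :
    diffCount (insert 1 A) B x = (if x⁻¹ ∈ B then 1 else 0) + diffCount A B x := by
  rw [insert_eq, diffCount_union_left (disjoint_singleton_left.2 hA),
    diffCount_singleton_one_left]

theorem diffCount_product_union {A B : Finset H} (hAB : Disjoint A B) (S T : Finset K)
    (x : H) (y : K) :
    diffCount (A ×ˢ S ∪ B ×ˢ T) (A ×ˢ S ∪ B ×ˢ T) (x, y) =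
      diffCount A A x * diffCount S S y + diffCount A B x * diffCount S T y +
        diffCount B A x * diffCount T S y + diffCount B B x * diffCount T T y := by
  have h : Disjoint (A ×ˢ S) (B ×ˢ T) := disjoint_product.2 (Or.inl hAB)
  rw [diffCount_union_left h, diffCount_union_right _ h, diffCount_union_right _ h,
    diffCount_product, diffCount_product, diffCount_product, diffCount_product]
  ring

end DiffCount

section Paley

variable {H : Type*} [Group H] [Fintype H] [DecidableEq H]

def pdsCompl (D : Finset H) : Finset H :=
  univ \ insert 1 D

theorem mem_pdsCompl {D : Finset H} {x : H} : x ∈ pdsCompl D ↔ x ≠ 1 ∧ x ∉ D := by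
  simp [pdsCompl]

theorem disjoint_pdsCompl (D : Finset H) : Disjoint D (pdsCompl D) :=
  disjoint_left.2 fun _ hx hE => (mem_pdsCompl.1 hE).2 hx

theorem diffCount_insert_one_add_diffCount_pdsCompl (A D : Finset H) (x : H) :
    diffCount A (insert 1 D) x + diffCount A (pdsCompl D) x = #A := by
  rw [pdsCompl, ← diffCount_union_right A disjoint_sdiff, union_sdiff_of_subset (subset_univ _),
    diffCount_univ_right]

/-- The Paley parameters `(v, (v-1)/2, (v-5)/4, (v-1)/4)` written with `v = 4m + 1`, free of
integer division. -/
abbrev IsPaleyTypePDS (D : Finset H) (m : ℤ) : Prop :=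
  IsRegularPDS D (4 * m + 1) (2 * m) (m - 1) m

theorem isRegularPDS_iff_isPaleyTypePDS (D : Finset H) {v m : ℤ} (hv : v = 4 * m + 1) :
    IsRegularPDS D v ((v - 1) / 2) ((v - 5) / 4) ((v - 1) / 4) ↔ IsPaleyTypePDS D m := by
  subst hv
  rw [show (4 * m + 1 - 1) / 2 = 2 * m by omega, show (4 * m + 1 - 5) / 4 = m - 1 by omega,
    show (4 * m + 1 - 1) / 4 = m by omega]

namespace IsPaleyTypePDS

variable {D : Finset H} {m : ℤ}

theorem one_notMem (hD : IsPaleyTypePDS D m) : (1 : H) ∉ D :=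
  hD.2.2.1

theorem inv_mem_iff (hD : IsPaleyTypePDS D m) {x : H} : x⁻¹ ∈ D ↔ x ∈ D :=
  ⟨fun h => by simpa using hD.2.2.2.1 _ h, hD.2.2.2.1 x⟩

theorem card_eq (hD : IsPaleyTypePDS D m) : (#D : ℤ) = 2 * m :=
  hD.2.1

theorem pdsCount_eq (hD : IsPaleyTypePDS D m) (x : H) :
    (pdsCount D x : ℤ) = if x = 1 then 2 * m else if x ∈ D then m - 1 else m := by
  split_ifs with h1 hx
  · rw [h1, pdsCount_eq_diffCount, diffCount_self_one, hD.card_eq]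
  · exact hD.2.2.2.2.1 x hx
  · exact hD.2.2.2.2.2 x h1 hx

theorem diffCount_pdsCompl (hD : IsPaleyTypePDS D m) (x : H) :
    (diffCount D (pdsCompl D) x : ℤ) = if x = 1 then 0 else m := by
  have hsum := diffCount_insert_one_add_diffCount_pdsCompl D D x
  rw [diffCount_insert_one_right D hD.one_notMem, ← pdsCount_eq_diffCount] at hsum
  have hcount := hD.pdsCount_eq x
  have hk := hD.card_eq
  by_cases h1 : x = 1
  · subst h1
    simp only [hD.one_notMem, if_false, if_true] at hsum hcount ⊢
    omega
  · by_cases hx : x ∈ D <;> simp only [h1, hx, if_false, if_true] at hsum hcount ⊢ <;> omega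

theorem diffCount_pdsCompl_left (hD : IsPaleyTypePDS D m) (x : H) :
    (diffCount (pdsCompl D) D x : ℤ) = if x = 1 then 0 else m := by
  rw [diffCount_swap, diffCount_pdsCompl hD]
  simp only [inv_eq_one]

theorem compl (hD : IsPaleyTypePDS D m) : IsPaleyTypePDS (pdsCompl D) m := by
  have hE : (#(pdsCompl D) : ℤ) = 2 * m := by
    have hG := hD.1
    have hk := hD.card_eq
    rw [pdsCompl, card_univ_sdiff, card_insert_of_notMem hD.one_notMem]
    omega
  have hcount (x : H) (h1 : x ≠ 1) :
      (pdsCount (pdsCompl D) x : ℤ) = if x ∈ pdsCompl D then m - 1 else m := by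
    have hsum := diffCount_insert_one_add_diffCount_pdsCompl (pdsCompl D) D x
    rw [diffCount_insert_one_right _ hD.one_notMem, ← pdsCount_eq_diffCount] at hsum
    have hED := hD.diffCount_pdsCompl_left x
    split_ifs at hsum hED ⊢ <;> omega
  refine ⟨hD.1, hE, fun h => (mem_pdsCompl.1 h).1 rfl, fun x hx => ?_,
    fun x hx => ?_, fun x h1 hx => ?_⟩
  · simpa [mem_pdsCompl, hD.inv_mem_iff] using hx
  · simpa [hx] using hcount x (mem_pdsCompl.1 hx).1
  · simpa [hx] using hcount x h1

theorem diffCount_insert_one (hD : IsPaleyTypePDS D m) (x : H) :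
    (diffCount (insert 1 D) (insert 1 D) x : ℤ) =
      if x = 1 then 2 * m + 1 else if x ∈ D then m + 1 else m := by
  rw [diffCount_insert_one_left hD.one_notMem, diffCount_insert_one_right _ hD.one_notMem,
    ← pdsCount_eq_diffCount]
  have hcount := hD.pdsCount_eq x
  by_cases h1 : x = 1
  · subst h1
    simp only [hD.one_notMem, if_false, if_true, inv_one, mem_insert_self] at hcount ⊢
    push_cast
    omega
  · by_cases hx : x ∈ D <;>
      simp only [h1, hx, hD.inv_mem_iff, mem_insert, inv_eq_one, if_false, if_true,
        false_or] at hcount ⊢ <;> push_cast <;> omega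

theorem diffCount_insert_one_pdsCompl (hD : IsPaleyTypePDS D m) (x : H) :
    (diffCount (insert 1 D) (insert 1 (pdsCompl D)) x : ℤ) = if x = 1 then 1 else m + 1 := by
  rw [diffCount_insert_one_left hD.one_notMem, diffCount_insert_one_right _ hD.compl.one_notMem]
  have hDE := hD.diffCount_pdsCompl x
  by_cases h1 : x = 1
  · subst h1
    simp only [hD.one_notMem, if_false, if_true, inv_one, mem_insert_self] at hDE ⊢
    push_cast
    omega
  · by_cases hx : x ∈ D <;>
      simp only [h1, hx, hD.inv_mem_iff, mem_insert, mem_pdsCompl, inv_eq_one, if_false,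
        if_true, false_or, ne_eq, not_false_eq_true, not_true_eq_false, and_true,
        and_false] at hDE ⊢ <;> push_cast <;> omega

theorem diffCount_insert_one_pdsCompl_left (hD : IsPaleyTypePDS D m) (x : H) :
    (diffCount (insert 1 (pdsCompl D)) (insert 1 D) x : ℤ) = if x = 1 then 1 else m + 1 := by
  rw [diffCount_swap, diffCount_insert_one_pdsCompl hD]
  simp only [inv_eq_one]

end IsPaleyTypePDS

end Paley

section Product

variable {G G' : Type*} [Group G] [Fintype G] [DecidableEq G]
  [Group G'] [Fintype G'] [DecidableEq G']

def paleyProduct (D : Finset G) (D' : Finset G') : Finset (G × G') :=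
  D ×ˢ {1} ∪ D ×ˢ D' ∪ pdsCompl D ×ˢ {1} ∪ pdsCompl D ×ˢ pdsCompl D'

theorem paleyProduct_eq (D : Finset G) (D' : Finset G') :
    paleyProduct D D' = D ×ˢ insert 1 D' ∪ pdsCompl D ×ˢ insert 1 (pdsCompl D') := by
  simp only [paleyProduct, insert_eq, product_union, union_assoc]

namespace IsPaleyTypePDS

variable {D : Finset G} {D' : Finset G'} {m : ℤ}

theorem pdsCount_paleyProduct (hD : IsPaleyTypePDS D m) (hD' : IsPaleyTypePDS D' m)
    (p : G × G') :
    (pdsCount (paleyProduct D D') p : ℤ) =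
      if p = 1 then 2 * (4 * m ^ 2 + 2 * m)
      else if p ∈ paleyProduct D D' then 4 * m ^ 2 + 2 * m - 1 else 4 * m ^ 2 + 2 * m := by
  obtain ⟨x, y⟩ := p
  rw [pdsCount_eq_diffCount, paleyProduct_eq, diffCount_product_union (disjoint_pdsCompl D)]
  push_cast
  rw [← pdsCount_eq_diffCount D, ← pdsCount_eq_diffCount (pdsCompl D), hD.pdsCount_eq,
    hD.compl.pdsCount_eq, hD.diffCount_pdsCompl, hD.diffCount_pdsCompl_left,
    hD'.diffCount_insert_one, hD'.compl.diffCount_insert_one, hD'.diffCount_insert_one_pdsCompl,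
    hD'.diffCount_insert_one_pdsCompl_left]
  have h1 := hD.one_notMem
  have h1' := hD'.one_notMem
  by_cases hx1 : x = 1 <;> by_cases hx : x ∈ D <;> by_cases hy1 : y = 1 <;>
    by_cases hy : y ∈ D' <;> simp [*, mem_pdsCompl] <;> ring

theorem paleyProduct (hD : IsPaleyTypePDS D m) (hD' : IsPaleyTypePDS D' m) :
    IsPaleyTypePDS (paleyProduct D D') (4 * m ^ 2 + 2 * m) := by
  have h1 : (1 : G × G') ∉ _root_.paleyProduct D D' := by
    simp [paleyProduct_eq, hD.one_notMem, hD.compl.one_notMem]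
  have hsymm : ∀ p ∈ _root_.paleyProduct D D', p⁻¹ ∈ _root_.paleyProduct D D' := by
    rintro ⟨x, y⟩ h
    simpa [paleyProduct_eq, mem_pdsCompl, hD.inv_mem_iff, hD'.inv_mem_iff] using h
  refine ⟨?_, ?_, h1, hsymm, fun p hp => ?_, fun p hp1 hp => ?_⟩
  · rw [Fintype.card_prod, Nat.cast_mul, hD.1, hD'.1]
    ring
  · rw [paleyProduct_eq,
      card_union_of_disjoint (disjoint_product.2 (Or.inl (disjoint_pdsCompl D))), card_product,
      card_product, card_insert_of_notMem hD'.one_notMem, card_insert_of_notMem hD'.compl.one_notMem]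
    push_cast
    rw [hD.card_eq, hD'.card_eq, hD.compl.card_eq, hD'.compl.card_eq]
    ring
  · rw [hD.pdsCount_paleyProduct hD', if_pos hp, if_neg (ne_of_mem_of_not_mem hp h1)]
  · rw [hD.pdsCount_paleyProduct hD', if_neg hp1, if_neg hp]

end IsPaleyTypePDS

end Product

/-- the product construction for Paley-type PDSs.  If `G` and `G'` both have
order `v` and possess regular Paley-type PDSs `D` and `D'`, then
`𝒟 = D×{1} ∪ D×D' ∪ Dᶜ×{1} ∪ Dᶜ×D'ᶜ` is a regular Paley-type PDS in `G × G'`. -/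
theorem stmt3 {G G' : Type*} [Group G] [Fintype G] [DecidableEq G]
    [Group G'] [Fintype G'] [DecidableEq G']
    (D : Finset G) (D' : Finset G') (v : ℕ) (hv4 : v % 4 = 1)
    (hD : IsRegularPDS D (v : ℤ) (((v : ℤ) - 1) / 2) (((v : ℤ) - 5) / 4) (((v : ℤ) - 1) / 4))
    (hD' : IsRegularPDS D' (v : ℤ) (((v : ℤ) - 1) / 2) (((v : ℤ) - 5) / 4) (((v : ℤ) - 1) / 4)) :
    IsRegularPDS
      ((D ×ˢ ({1} : Finset G')) ∪ (D ×ˢ D') ∪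
        ((Finset.univ \ insert (1 : G) D) ×ˢ ({1} : Finset G')) ∪
        ((Finset.univ \ insert (1 : G) D) ×ˢ (Finset.univ \ insert (1 : G') D')))
      ((v : ℤ) ^ 2) (((v : ℤ) ^ 2 - 1) / 2) (((v : ℤ) ^ 2 - 5) / 4)
      (((v : ℤ) ^ 2 - 1) / 4) := by
  obtain ⟨m, hm⟩ : ∃ m : ℤ, (v : ℤ) = 4 * m + 1 := ⟨v / 4, by omega⟩
  rw [isRegularPDS_iff_isPaleyTypePDS _ hm] at hD hD'
  have hsq : (v : ℤ) ^ 2 = 4 * (4 * m ^ 2 + 2 * m) + 1 := by rw [hm]; ring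
  exact (isRegularPDS_iff_isPaleyTypePDS _ hsq).2 (hD.paleyProduct hD')
end

section
/- Let G be a group of order v containing a regular Paley-type (v,(v−1)/2,(v−5)/4,(v−1)/4)-PDS D, and let G′ be a group of order v+2 containing a skew Hadamard (v+2,(v+1)/2,(v−1)/4)-difference set D′. Then 𝒟 = (G × {1}) ∪ (D × D′) ∪ (D^c × D′^{(−1)}) is a (v(v+2), (v(v+2)−1)/2, (v(v+2)−3)/4)-difference set in G × G′, where D^c = G − 1_G − D and D′^{(−1)} = {d⁻¹ : d ∈ D′}. -/
open Finset

/-- `D` is a `(v,k,λ)`-difference set in `G`. -/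
def IsDiffSet {G : Type*} [Group G] [Fintype G] [DecidableEq G]
    (D : Finset G) (v k l : ℤ) : Prop :=
  (Fintype.card G : ℤ) = v ∧ (D.card : ℤ) = k ∧
  (∀ x : G, x ≠ 1 → (pdsCount D x : ℤ) = l)

section CrossCount
variable {G : Type*} [Group G] [DecidableEq G]

def crossCount (S T : Finset G) (x : G) : ℕ :=
  ((S ×ˢ T).filter (fun p => p.1 * p.2⁻¹ = x)).card

set_option linter.unusedSectionVars false

lemma crossCount_eq_left (S T : Finset G) (x : G) :
    crossCount S T x = (S.filter fun a => x⁻¹ * a ∈ T).card := by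
  rw [crossCount, ← Finset.card_image_of_injective (S.filter fun a => x⁻¹ * a ∈ T)
      (f := fun a => (a, x⁻¹ * a)) (fun a b h => by simpa using congrArg Prod.fst h)]
  congr 1
  ext p
  simp only [mem_filter, mem_product, mem_image]
  constructor
  · rintro ⟨⟨h1, h2⟩, h3⟩
    subst h3
    have hp2 : (p.1 * p.2⁻¹)⁻¹ * p.1 = p.2 := by group
    exact ⟨p.1, ⟨h1, by rw [hp2]; exact h2⟩, by rw [hp2]⟩
  · rintro ⟨a, ⟨h1, h2⟩, rfl⟩
    exact ⟨⟨h1, h2⟩, by group⟩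

lemma crossCount_eq_right (S T : Finset G) (x : G) :
    crossCount S T x = (T.filter fun b => x * b ∈ S).card := by
  rw [crossCount, ← Finset.card_image_of_injective (T.filter fun b => x * b ∈ S)
      (f := fun b => (x * b, b)) (fun a b h => by simpa using congrArg Prod.snd h)]
  congr 1
  ext p
  simp only [mem_filter, mem_product, mem_image]
  constructor
  · rintro ⟨⟨h1, h2⟩, h3⟩
    subst h3
    have hp1 : p.1 * p.2⁻¹ * p.2 = p.1 := by group
    exact ⟨p.2, ⟨h2, by rw [hp1]; exact h1⟩, by rw [hp1]⟩
  · rintro ⟨b, ⟨h1, h2⟩, rfl⟩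
    exact ⟨⟨h2, h1⟩, by group⟩

lemma crossCount_union_left (S₁ S₂ T : Finset G) (x : G) (h : Disjoint S₁ S₂) :
    crossCount (S₁ ∪ S₂) T x = crossCount S₁ T x + crossCount S₂ T x := by
  simp only [crossCount_eq_left, filter_union]
  exact card_union_of_disjoint (h.mono (filter_subset _ _) (filter_subset _ _))

lemma crossCount_union_right (S T₁ T₂ : Finset G) (x : G) (h : Disjoint T₁ T₂) :
    crossCount S (T₁ ∪ T₂) x = crossCount S T₁ x + crossCount S T₂ x := by
  simp only [crossCount_eq_right, filter_union]
  exact card_union_of_disjoint (h.mono (filter_subset _ _) (filter_subset _ _))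

lemma crossCount_insert_left (S T : Finset G) (a x : G) (h : a ∉ S) :
    crossCount (insert a S) T x = crossCount {a} T x + crossCount S T x := by
  rw [Finset.insert_eq, crossCount_union_left _ _ _ _ (Finset.disjoint_singleton_left.mpr h)]

lemma crossCount_insert_right (S T : Finset G) (a x : G) (h : a ∉ T) :
    crossCount S (insert a T) x = crossCount S {a} x + crossCount S T x := by
  rw [Finset.insert_eq, crossCount_union_right _ _ _ _ (Finset.disjoint_singleton_left.mpr h)]

lemma crossCount_self_one (S : Finset G) : crossCount S S 1 = S.card := by
  rw [crossCount_eq_left]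
  simp [Finset.filter_true_of_mem (fun a ha => by simpa using ha)]

variable [Fintype G]

lemma crossCount_univ_left (T : Finset G) (x : G) : crossCount univ T x = T.card := by
  rw [crossCount_eq_right]; simp

lemma crossCount_univ_right (S : Finset G) (x : G) : crossCount S univ x = S.card := by
  rw [crossCount_eq_left]; simp

lemma crossCount_one_left (T : Finset G) (x : G) :
    crossCount {1} T x = if x⁻¹ ∈ T then 1 else 0 := by
  rw [crossCount_eq_left]
  simp only [filter_singleton, mul_one]
  split_ifs <;> simp

lemma crossCount_one_right (S : Finset G) (x : G) :
    crossCount S {1} x = if x ∈ S then 1 else 0 := by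
  rw [crossCount_eq_right]
  simp only [filter_singleton, mul_one]
  split_ifs <;> simp

lemma crossCount_sdiff_right (S A : Finset G) (x : G) :
    crossCount S A x + crossCount S (univ \ A) x = S.card := by
  rw [← crossCount_univ_right S x, ← crossCount_union_right S A (univ \ A) x disjoint_sdiff,
    Finset.union_sdiff_of_subset (Finset.subset_univ A)]

lemma crossCount_sdiff_left (A T : Finset G) (x : G) :
    crossCount A T x + crossCount (univ \ A) T x = T.card := by
  rw [← crossCount_univ_left T x, ← crossCount_union_left A (univ \ A) T x disjoint_sdiff,
    Finset.union_sdiff_of_subset (Finset.subset_univ A)]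

end CrossCount

lemma crossCount_prod {G G' : Type*} [Group G] [DecidableEq G] [Group G'] [DecidableEq G']
    (S₁ S₂ : Finset G) (T₁ T₂ : Finset G') (x : G) (y : G') :
    crossCount (S₁ ×ˢ T₁) (S₂ ×ˢ T₂) (x, y) = crossCount S₁ S₂ x * crossCount T₁ T₂ y := by
  simp only [crossCount_eq_left]
  rw [← card_product]
  congr 1
  rw [← Finset.filter_product]
  congr 1
  ext p
  simp [Prod.ext_iff]

/-- the Stanton–Sprott (twin prime power) construction.  If `G` of order `v` has a
regular Paley-type PDS `D` and `G'` of order `v+2` has a skew Hadamard difference set `D'`,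
then `𝒟 = (G×{1}) ∪ (D×D') ∪ (Dᶜ×D'⁽⁻¹⁾)` is a Paley-Hadamard difference set in `G × G'`. -/
theorem stmt4 {G G' : Type*} [Group G] [Fintype G] [DecidableEq G]
    [Group G'] [Fintype G'] [DecidableEq G']
    (D : Finset G) (D' : Finset G') (v : ℕ) (hv4 : v % 4 = 1)
    (hD : IsRegularPDS D (v : ℤ) (((v : ℤ) - 1) / 2) (((v : ℤ) - 5) / 4) (((v : ℤ) - 1) / 4))
    (hD' : IsDiffSet D' ((v : ℤ) + 2) (((v : ℤ) + 1) / 2) (((v : ℤ) - 1) / 4))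
    (hskew1 : (1 : G') ∉ D')
    (hskew2 : ∀ g : G', g ≠ 1 → (g ∈ D' ↔ g⁻¹ ∉ D')) :
    IsDiffSet
      (((Finset.univ : Finset G) ×ˢ ({1} : Finset G')) ∪ (D ×ˢ D') ∪
        ((Finset.univ \ insert (1 : G) D) ×ˢ (D'.image (fun d => d⁻¹))))
      ((v : ℤ) * ((v : ℤ) + 2)) (((v : ℤ) * ((v : ℤ) + 2) - 1) / 2)
      (((v : ℤ) * ((v : ℤ) + 2) - 3) / 4) := by
  classical
  obtain ⟨hvG, hkD, h1D, hsym, hlamD, hmuD⟩ := hD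
  obtain ⟨hvG', hkD', hlamD'⟩ := hD'
  obtain ⟨t, rfl⟩ : ∃ t, v = 4 * t + 1 := ⟨v / 4, by omega⟩
  -- numeric facts
  have hcardGn : Fintype.card G = 4 * t + 1 := by
    have : (Fintype.card G : ℤ) = 4 * (t : ℤ) + 1 := by rw [hvG]; push_cast; ring
    exact_mod_cast this
  have hcardG'n : Fintype.card G' = 4 * t + 3 := by
    have : (Fintype.card G' : ℤ) = 4 * (t : ℤ) + 3 := by rw [hvG']; push_cast; ring
    exact_mod_cast this
  have hDn : D.card = 2 * t := by
    have : (D.card : ℤ) = 2 * (t : ℤ) := by rw [hkD]; push_cast; omega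
    exact_mod_cast this
  have hD'n : D'.card = 2 * t + 1 := by
    have : (D'.card : ℤ) = 2 * (t : ℤ) + 1 := by rw [hkD']; push_cast; omega
    exact_mod_cast this
  have hlam : ∀ x ∈ D, (crossCount D D x : ℤ) = (t : ℤ) - 1 := fun x hx => by
    have h := hlamD x hx; rw [show pdsCount D x = crossCount D D x from rfl] at h
    rw [h]; push_cast; omega
  have hmu : ∀ x : G, x ≠ 1 → x ∉ D → (crossCount D D x : ℤ) = (t : ℤ) := fun x h1 h2 => by
    have h := hmuD x h1 h2; rw [show pdsCount D x = crossCount D D x from rfl] at h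
    rw [h]; push_cast; omega
  have hlam' : ∀ y : G', y ≠ 1 → (crossCount D' D' y : ℤ) = (t : ℤ) := fun y h1 => by
    have h := hlamD' y h1; rw [show pdsCount D' y = crossCount D' D' y from rfl] at h
    rw [h]; push_cast; omega
  -- the inverse set
  have hDi : D'.image (fun d => d⁻¹) = univ \ insert (1 : G') D' := by
    ext g
    simp only [mem_image, mem_sdiff, mem_univ, true_and, mem_insert, not_or]
    constructor
    · rintro ⟨d, hd, rfl⟩
      have hd1 : d ≠ 1 := fun h => hskew1 (h ▸ hd)
      refine ⟨by simpa using hd1, ?_⟩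
      simpa using ((hskew2 d hd1).mp hd)
    · rintro ⟨hg1, hg2⟩
      refine ⟨g⁻¹, ?_, inv_inv g⟩
      by_contra h
      exact hg2 ((hskew2 g hg1).mpr h)
  rw [hDi]
  set Dc : Finset G := univ \ insert (1 : G) D with hDcdef
  set Di : Finset G' := univ \ insert (1 : G') D' with hDidef
  have hDcn : Dc.card = 2 * t := by
    rw [hDcdef, card_sdiff_of_subset (subset_univ _), card_insert_of_notMem h1D, card_univ, hcardGn, hDn]
    omega
  have hDin : Di.card = 2 * t + 1 := by
    rw [hDidef, card_sdiff_of_subset (subset_univ _), card_insert_of_notMem hskew1, card_univ, hcardG'n, hD'n]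
    omega
  -- disjointness
  have dAB : Disjoint ((univ : Finset G) ×ˢ ({1} : Finset G')) (D ×ˢ D') := by
    rw [Finset.disjoint_left]
    rintro ⟨a, b⟩ hA hB
    rw [mem_product] at hA hB
    simp only [mem_singleton] at hA
    exact hskew1 (hA.2 ▸ hB.2)
  have dAC : Disjoint ((univ : Finset G) ×ˢ ({1} : Finset G')) (Dc ×ˢ Di) := by
    rw [Finset.disjoint_left]
    rintro ⟨a, b⟩ hA hB
    rw [mem_product] at hA hB
    simp only [mem_singleton] at hA
    have := hB.2
    rw [hA.2, hDidef, mem_sdiff] at this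
    exact this.2 (mem_insert_self _ _)
  have dBC : Disjoint (D ×ˢ D') (Dc ×ˢ Di) := by
    rw [Finset.disjoint_left]
    rintro ⟨a, b⟩ hA hB
    rw [mem_product] at hA hB
    have := hB.1
    rw [hDcdef, mem_sdiff] at this
    exact this.2 (mem_insert_of_mem hA.1)
  have dABC : Disjoint ((univ : Finset G) ×ˢ ({1} : Finset G') ∪ D ×ˢ D') (Dc ×ˢ Di) :=
    disjoint_union_left.mpr ⟨dAC, dBC⟩
  refine ⟨?_, ?_, ?_⟩
  · rw [Fintype.card_prod, hcardGn, hcardG'n]; push_cast; ring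
  · have hc : (((univ : Finset G) ×ˢ ({1} : Finset G') ∪ D ×ˢ D') ∪ Dc ×ˢ Di).card
        = 8 * t * t + 8 * t + 1 := by
      rw [card_union_of_disjoint dABC, card_union_of_disjoint dAB, card_product, card_product,
        card_product, card_univ, hcardGn, card_singleton, hDn, hD'n, hDcn, hDin]
      ring
    have h2 : (((4 * t + 1 : ℕ) : ℤ) * (((4 * t + 1 : ℕ) : ℤ) + 2) - 1)
        = 2 * (8 * (t : ℤ) * t + 8 * t + 1) := by push_cast; ring
    rw [h2, Int.mul_ediv_cancel_left _ two_ne_zero, hc]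
    push_cast; ring
  · rintro ⟨x, y⟩ hxy
    have hxy' : ¬(x = 1 ∧ y = 1) := by
      intro h
      exact hxy (Prod.ext h.1 h.2)
    have hLam : (((4 * t + 1 : ℕ) : ℤ) * (((4 * t + 1 : ℕ) : ℤ) + 2) - 3)
        = 4 * (4 * (t : ℤ) * t + 4 * t) := by push_cast; ring
    rw [hLam, Int.mul_ediv_cancel_left _ (by norm_num)]
    show ((crossCount (((univ : Finset G) ×ˢ ({1} : Finset G') ∪ D ×ˢ D') ∪ Dc ×ˢ Di)
      (((univ : Finset G) ×ˢ ({1} : Finset G') ∪ D ×ˢ D') ∪ Dc ×ˢ Di) (x, y) : ℤ)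
      = 4 * (t : ℤ) * t + 4 * t)
    rw [crossCount_union_left _ _ _ _ dABC, crossCount_union_left _ _ _ _ dAB,
      crossCount_union_right _ _ _ _ dABC, crossCount_union_right _ _ _ _ dABC,
      crossCount_union_right _ _ _ _ dABC, crossCount_union_right _ _ _ _ dAB,
      crossCount_union_right _ _ _ _ dAB, crossCount_union_right _ _ _ _ dAB]
    simp only [crossCount_prod]
    push_cast
    -- G-side evaluations
    have hxinv : x⁻¹ ∈ D ↔ x ∈ D := ⟨fun h => by simpa using hsym _ h, fun h => hsym _ h⟩
    have g1 : ((crossCount (univ : Finset G) univ x : ℕ) : ℤ) = 4 * (t : ℤ) + 1 := by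
      rw [crossCount_univ_left, card_univ, hcardGn]; push_cast; ring
    have g2 : ((crossCount (univ : Finset G) D x : ℕ) : ℤ) = 2 * (t : ℤ) := by
      rw [crossCount_univ_left, hDn]; push_cast; ring
    have g3 : ((crossCount (univ : Finset G) Dc x : ℕ) : ℤ) = 2 * (t : ℤ) := by
      rw [crossCount_univ_left, hDcn]; push_cast; ring
    have g4 : ((crossCount D (univ : Finset G) x : ℕ) : ℤ) = 2 * (t : ℤ) := by
      rw [crossCount_univ_right, hDn]; push_cast; ring
    have g7 : ((crossCount Dc (univ : Finset G) x : ℕ) : ℤ) = 2 * (t : ℤ) := by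
      rw [crossCount_univ_right, hDcn]; push_cast; ring
    have hg6n := crossCount_sdiff_right D (insert (1 : G) D) x
    rw [crossCount_insert_right _ _ _ _ h1D, crossCount_one_right, hDn, ← hDcdef] at hg6n
    have hg8n := crossCount_sdiff_left (insert (1 : G) D) D x
    rw [crossCount_insert_left _ _ _ _ h1D, crossCount_one_left, hDn, ← hDcdef,
      if_congr hxinv rfl rfl] at hg8n
    have hg9n := crossCount_sdiff_left (insert (1 : G) D) Dc x
    have hcondx : x⁻¹ ∈ Dc ↔ (¬x = 1 ∧ x ∉ D) := by
      rw [hDcdef]; simp [hxinv, inv_eq_one]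
    rw [crossCount_insert_left _ _ _ _ h1D, crossCount_one_left, ← hDcdef, hDcn,
      if_congr hcondx rfl rfl] at hg9n
    have g6 : ((crossCount D Dc x : ℕ) : ℤ)
        = 2 * (t : ℤ) - (if x ∈ D then 1 else 0) - (crossCount D D x : ℤ) := by
      split_ifs at hg6n ⊢ <;> omega
    have g8 : ((crossCount Dc D x : ℕ) : ℤ)
        = 2 * (t : ℤ) - (if x ∈ D then 1 else 0) - (crossCount D D x : ℤ) := by
      split_ifs at hg8n ⊢ <;> omega
    have g9 : ((crossCount Dc Dc x : ℕ) : ℤ)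
        = (crossCount D D x : ℤ) + (if x ∈ D then 1 else 0)
          - (if (¬x = 1 ∧ x ∉ D) then 1 else 0) := by
      split_ifs at hg6n hg9n ⊢ <;> omega
    -- G'-side evaluations
    have h1 : ((crossCount ({1} : Finset G') {1} y : ℕ) : ℤ) = if y = 1 then 1 else 0 := by
      have hc1 : y⁻¹ ∈ ({1} : Finset G') ↔ y = 1 := by simp [inv_eq_one]
      rw [crossCount_one_left, if_congr hc1 rfl rfl]
      split_ifs <;> simp
    have h2 : ((crossCount ({1} : Finset G') D' y : ℕ) : ℤ) = if y⁻¹ ∈ D' then 1 else 0 := by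
      rw [crossCount_one_left]; split_ifs <;> simp
    have hcondy : y⁻¹ ∈ Di ↔ (¬y = 1 ∧ y⁻¹ ∉ D') := by
      rw [hDidef]; simp [inv_eq_one]
    have hcondy2 : y ∈ Di ↔ (¬y = 1 ∧ y ∉ D') := by
      rw [hDidef]; simp
    have h3 : ((crossCount ({1} : Finset G') Di y : ℕ) : ℤ)
        = if (¬y = 1 ∧ y⁻¹ ∉ D') then 1 else 0 := by
      rw [crossCount_one_left, if_congr hcondy rfl rfl]; split_ifs <;> simp
    have h4 : ((crossCount D' ({1} : Finset G') y : ℕ) : ℤ) = if y ∈ D' then 1 else 0 := by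
      rw [crossCount_one_right]; split_ifs <;> simp
    have h7 : ((crossCount Di ({1} : Finset G') y : ℕ) : ℤ)
        = if (¬y = 1 ∧ y ∉ D') then 1 else 0 := by
      rw [crossCount_one_right, if_congr hcondy2 rfl rfl]; split_ifs <;> simp
    have hh6n := crossCount_sdiff_right D' (insert (1 : G') D') y
    rw [crossCount_insert_right _ _ _ _ hskew1, crossCount_one_right, hD'n, ← hDidef] at hh6n
    have hh8n := crossCount_sdiff_left (insert (1 : G') D') D' y
    rw [crossCount_insert_left _ _ _ _ hskew1, crossCount_one_left, hD'n, ← hDidef] at hh8n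
    have hh9n := crossCount_sdiff_left (insert (1 : G') D') Di y
    rw [crossCount_insert_left _ _ _ _ hskew1, crossCount_one_left, ← hDidef, hDin,
      if_congr hcondy rfl rfl] at hh9n
    have h6 : ((crossCount D' Di y : ℕ) : ℤ)
        = 2 * (t : ℤ) + 1 - (if y ∈ D' then 1 else 0) - (crossCount D' D' y : ℤ) := by
      split_ifs at hh6n ⊢ <;> omega
    have h8 : ((crossCount Di D' y : ℕ) : ℤ)
        = 2 * (t : ℤ) + 1 - (if y⁻¹ ∈ D' then 1 else 0) - (crossCount D' D' y : ℤ) := by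
      split_ifs at hh8n ⊢ <;> omega
    have h9 : ((crossCount Di Di y : ℕ) : ℤ)
        = (crossCount D' D' y : ℤ) + (if y ∈ D' then 1 else 0)
          - (if (¬y = 1 ∧ y⁻¹ ∉ D') then 1 else 0) := by
      split_ifs at hh6n hh9n ⊢ <;> omega
    rw [g1, g2, g3, g4, g6, g7, g8, g9, h1, h2, h3, h4, h6, h7, h8, h9]
    by_cases hy1 : y = 1
    · subst hy1
      have hx1 : ¬x = 1 := fun h => hxy' ⟨h, rfl⟩
      have hb : (crossCount D' D' (1 : G') : ℤ) = 2 * (t : ℤ) + 1 := by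
        rw [crossCount_self_one, hD'n]; push_cast; ring
      by_cases hxD : x ∈ D
      · have ha := hlam x hxD
        rw [ha, hb]
        simp [hx1, hxD, hskew1]
        ring
      · have ha := hmu x hx1 hxD
        rw [ha, hb]
        simp [hx1, hxD, hskew1]
        ring
    · have hb := hlam' y hy1
      have hyd : y ∈ D' ↔ y⁻¹ ∉ D' := hskew2 y hy1
      by_cases hx1 : x = 1
      · subst hx1
        have ha : (crossCount D D (1 : G) : ℤ) = 2 * (t : ℤ) := by
          rw [crossCount_self_one, hDn]; push_cast; ring
        rw [ha, hb]
        by_cases hyD : y ∈ D'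
        · have hyi : y⁻¹ ∉ D' := hyd.mp hyD
          simp [hy1, hyD, hyi, h1D]
          ring
        · have hyi : y⁻¹ ∈ D' := by by_contra h; exact hyD (hyd.mpr h)
          simp [hy1, hyD, hyi, h1D]
          ring
      · by_cases hxD : x ∈ D
        · have ha := hlam x hxD
          rw [ha, hb]
          by_cases hyD : y ∈ D'
          · have hyi : y⁻¹ ∉ D' := hyd.mp hyD
            simp [hy1, hyD, hyi, hx1, hxD]
            ring
          · have hyi : y⁻¹ ∈ D' := by by_contra h; exact hyD (hyd.mpr h)
            simp [hy1, hyD, hyi, hx1, hxD]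
            ring
        · have ha := hmu x hx1 hxD
          rw [ha, hb]
          by_cases hyD : y ∈ D'
          · have hyi : y⁻¹ ∉ D' := hyd.mp hyD
            simp [hy1, hyD, hyi, hx1, hxD]
            ring
          · have hyi : y⁻¹ ∈ D' := by by_contra h; exact hyD (hyd.mpr h)
            simp [hy1, hyD, hyi, hx1, hxD]
            ring
end

section
/- Let q be an odd prime power and let H = {A_α : α ∈ F_q} ≤ GL(2m,q) be an elementary abelian group of order q fixing a vector v with v nonsingular (so vA_α = v for all α) and leaving v^⊥ invariant. In the affine group AGL(2m,q) with multiplication [M₁,v₁][M₂,v₂] = [M₁M₂, v₁M₂ + v₂], the set 𝒜 = {[A_α, αv] : α ∈ F_q} is a subgroup isomorphic to (F_q,+), and 𝒜 normalizes T = {[I,u] : u ∈ v^⊥}. Consequently G₁ = ⟨T, 𝒜⟩ = T ⋊ 𝒜 is a group of order q^{2m} acting regularly on F_q^{2m} via v^{[M,u]} = vM + u. -/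
open Finset Matrix

/-- The polar form `β(x,y) = Q(x+y) − Q(x) − Q(y)` of `Q`. -/
def polarQ {F V : Type*} [Field F] [AddCommGroup V] (Q : V → F) (x y : V) : F :=
  Q (x + y) - Q x - Q y

/-- Multiplication `[M₁,v₁][M₂,v₂] = [M₁M₂, v₁M₂ + v₂]` in the affine group `AGL(n,q)`,
where elements are represented as pairs `[M,u]` acting by `v ↦ vM + u`. -/
def affMul {F : Type*} [Field F] {n : ℕ}
    (g h : Matrix (Fin n) (Fin n) F × (Fin n → F)) :
    Matrix (Fin n) (Fin n) F × (Fin n → F) :=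
  (g.1 * h.1, Matrix.vecMul g.2 h.1 + h.2)

/-- given an elementary abelian group `H = {A_α}` of matrices fixing a
nonsingular vector `v` and leaving `v^⊥` invariant, the set `𝒜 = {[A_α, αv]}` is a subgroup
of `AGL(2m,q)` isomorphic to `(F_q,+)`, it normalizes `T = {[I,u] : u ∈ v^⊥}`, and
`G₁ = T ⋊ 𝒜` has order `q^{2m}` and acts regularly on `F_q^{2m}` via `v^{[M,u]} = vM + u`. -/
theorem stmt11 {F : Type*} [Field F] [Fintype F] [DecidableEq F] (q m : ℕ)
    (hcard : Fintype.card F = q) (hodd : Odd q) (hm : 1 ≤ m)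
    (A : F → Matrix (Fin (2 * m)) (Fin (2 * m)) F)
    (hA0 : A 0 = 1) (hAadd : ∀ α β : F, A (α + β) = A α * A β)
    (hAinj : Function.Injective A)
    (Q : (Fin (2 * m) → F) → F)
    (hQhom : ∀ (a : F) (x : Fin (2 * m) → F), Q (a • x) = a ^ 2 * Q x)
    (hadd : ∀ x x' y : Fin (2 * m) → F, polarQ Q (x + x') y = polarQ Q x y + polarQ Q x' y)
    (hsmul : ∀ (a : F) (x y : Fin (2 * m) → F), polarQ Q (a • x) y = a * polarQ Q x y)
    (hnd : ∀ x : Fin (2 * m) → F, (∀ y, polarQ Q x y = 0) → x = 0)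
    (hpres : ∀ (α : F) (x : Fin (2 * m) → F), Q (Matrix.vecMul x (A α)) = Q x)
    (v : Fin (2 * m) → F) (hv : Q v ≠ 0)
    (hfix : ∀ α : F, Matrix.vecMul v (A α) = v)
    (hperp : ∀ (α : F) (u : Fin (2 * m) → F),
      polarQ Q u v = 0 → polarQ Q (Matrix.vecMul u (A α)) v = 0) :
    -- 𝒜 is closed under multiplication (and `α ↦ [A_α, αv]` is a homomorphism from `(F,+)`)
    (∀ α β : F, affMul (A α, α • v) (A β, β • v) = (A (α + β), (α + β) • v)) ∧
    -- inverses stay in 𝒜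
    (∀ α : F, affMul (A α, α • v) (A (-α), (-α) • v) = (1, 0)) ∧
    -- `α ↦ [A_α, αv]` is injective, so 𝒜 ≅ (F_q, +)
    Function.Injective (fun α : F => (A α, α • v)) ∧
    -- 𝒜 normalizes T = {[I,u] : u ∈ v^⊥}
    (∀ (α : F) (u : Fin (2 * m) → F), polarQ Q u v = 0 →
      ∃ u' : Fin (2 * m) → F, polarQ Q u' v = 0 ∧
        affMul ((1 : Matrix (Fin (2 * m)) (Fin (2 * m)) F), u) (A α, α • v) =
          affMul (A α, α • v) ((1 : Matrix (Fin (2 * m)) (Fin (2 * m)) F), u')) ∧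
    -- G₁ = T ⋊ 𝒜 = {[A_α, αv + u] : α ∈ F, u ∈ v^⊥} has order q^{2m}
    Nat.card {g : Matrix (Fin (2 * m)) (Fin (2 * m)) F × (Fin (2 * m) → F) //
        ∃ (α : F) (u : Fin (2 * m) → F), polarQ Q u v = 0 ∧ g = (A α, α • v + u)}
      = q ^ (2 * m) ∧
    -- G₁ acts regularly on F_q^{2m} via w^{[M,u]} = wM + u
    (∀ w z : Fin (2 * m) → F, ∃! g : F × (Fin (2 * m) → F),
      polarQ Q g.2 v = 0 ∧ Matrix.vecMul w (A g.1) + (g.1 • v + g.2) = z) := by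
  -- characteristic is odd, so 2 ≠ 0
  have two_ne : (2 : F) ≠ 0 := by
    intro h2
    have hdvd : ringChar F ∣ 2 := ringChar.dvd (by exact_mod_cast h2)
    have h12 : ringChar F = 1 ∨ ringChar F = 2 := (Nat.dvd_prime Nat.prime_two).mp hdvd
    have hch : ringChar F = 2 := h12.resolve_left (CharP.ringChar_ne_one)
    have heven : Fintype.card F % 2 = 0 := FiniteField.even_card_iff_char_two.mp hch
    rw [hcard] at heven
    rw [Nat.odd_iff] at hodd
    omega
  have hLneg : ∀ x : Fin (2 * m) → F, polarQ Q (-x) v = - polarQ Q x v := by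
    intro x
    have := hsmul (-1) x v
    simpa using this
  have hLsub : ∀ x y : Fin (2 * m) → F,
      polarQ Q (x - y) v = polarQ Q x v - polarQ Q y v := by
    intro x y
    rw [sub_eq_add_neg, hadd, hLneg, sub_eq_add_neg]
  have hLv : polarQ Q v v = 2 * Q v := by
    have h2 : v + v = (2 : F) • v := by rw [two_smul]
    unfold polarQ
    rw [h2, hQhom]
    ring
  have hLv_ne : polarQ Q v v ≠ 0 := by
    rw [hLv]; exact mul_ne_zero two_ne hv
  have hLinv : ∀ (α : F) (x : Fin (2 * m) → F),
      polarQ Q (Matrix.vecMul x (A α)) v = polarQ Q x v := by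
    intro α x
    conv_lhs => rw [← hfix α]
    unfold polarQ
    rw [← Matrix.add_vecMul, hpres, hpres, hpres]
  -- the regularity statement (part 6), proved first
  have hreg : ∀ w z : Fin (2 * m) → F, ∃! g : F × (Fin (2 * m) → F),
      polarQ Q g.2 v = 0 ∧ Matrix.vecMul w (A g.1) + (g.1 • v + g.2) = z := by
    intro w z
    set c : F := (polarQ Q z v - polarQ Q w v) / (polarQ Q v v) with hcdef
    have hc : c * polarQ Q v v = polarQ Q z v - polarQ Q w v :=
      div_mul_cancel₀ _ hLv_ne
    refine ⟨(c, z - Matrix.vecMul w (A c) - c • v), ⟨?_, ?_⟩, ?_⟩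
    · show polarQ Q (z - Matrix.vecMul w (A c) - c • v) v = 0
      rw [hLsub, hLsub, hLinv, hsmul]
      linear_combination -hc
    · show Matrix.vecMul w (A c) + (c • v + (z - Matrix.vecMul w (A c) - c • v)) = z
      abel
    · rintro ⟨a, u⟩ ⟨hu, heq⟩
      simp only at hu heq
      have hLeq : polarQ Q (Matrix.vecMul w (A a) + (a • v + u)) v = polarQ Q z v := by
        rw [heq]
      rw [hadd, hadd, hLinv, hsmul, hu, add_zero] at hLeq
      have ha : a = c := by
        refine mul_right_cancel₀ hLv_ne ?_
        rw [hc]; linear_combination hLeq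
      subst ha
      have hueq : u = z - Matrix.vecMul w (A c) - c • v := by
        rw [← heq]; abel
      rw [hueq]
  refine ⟨?_, ?_, ?_, ?_, ?_, hreg⟩
  · -- closure under multiplication
    intro α β
    unfold affMul
    rw [← hAadd]
    congr 1
    rw [Matrix.smul_vecMul, hfix, ← add_smul]
  · -- inverses
    intro α
    unfold affMul
    rw [← hAadd, add_neg_cancel, hA0]
    congr 1
    rw [Matrix.smul_vecMul, hfix, ← add_smul, add_neg_cancel, zero_smul]
  · -- injectivity
    intro a b h
    exact hAinj (congrArg Prod.fst h)
  · -- normalization of T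
    intro α u hu
    refine ⟨Matrix.vecMul u (A α), hperp α u hu, ?_⟩
    unfold affMul
    simp only [one_mul, mul_one, Matrix.vecMul_one, Matrix.smul_vecMul, hfix]
    rw [add_comm]
  · -- cardinality of G₁
    have hbij : Function.Bijective
        (fun g : {g : Matrix (Fin (2 * m)) (Fin (2 * m)) F × (Fin (2 * m) → F) //
          ∃ (α : F) (u : Fin (2 * m) → F), polarQ Q u v = 0 ∧ g = (A α, α • v + u)} =>
          g.1.2) := by
      constructor
      · rintro ⟨g, α, u, hu, rfl⟩ ⟨g', α', u', hu', rfl⟩ h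
        simp only at h
        have hL : polarQ Q (α • v + u) v = polarQ Q (α' • v + u') v := by rw [h]
        rw [hadd, hadd, hsmul, hsmul, hu, hu', add_zero, add_zero] at hL
        have hαα : α = α' := mul_right_cancel₀ hLv_ne hL
        subst hαα
        have huu : u = u' := by
          have := h
          rwa [add_right_inj] at this
        subst huu
        rfl
      · intro z
        set c : F := polarQ Q z v / polarQ Q v v with hcdef
        have hc : c * polarQ Q v v = polarQ Q z v := div_mul_cancel₀ _ hLv_ne
        have hu : polarQ Q (z - c • v) v = 0 := by
          rw [hLsub, hsmul]
          linear_combination -hc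
        refine ⟨⟨(A c, c • v + (z - c • v)), c, z - c • v, hu, rfl⟩, ?_⟩
        show c • v + (z - c • v) = z
        abel
    rw [Nat.card_eq_of_bijective _ hbij, Nat.card_eq_fintype_card, Fintype.card_fun,
      hcard, Fintype.card_fin]
end

section
/- Let q be an odd prime, V = F_q⁴ with hyperbolic form Q(x) = x₁x₂ + x₃x₄. Define v_∞ = e₄, v_α = e₂ + αe₄ for α ∈ F_q, u_∞ = e₁, u_α = αe₁ − e₃, and U_α = span{v_α, u_α} for α ∈ F_q ∪ {∞}. Then the q+1 two-dimensional subspaces U_α are pairwise trivially intersecting, each U_α ∖ {0} consists entirely of vectors x with Q(x) = 0, and ⋃_α (U_α ∖ {0}) equals {x ∈ V : x ≠ 0, Q(x) = 0}. -/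
open Finset

/-- The hyperbolic quadratic form `Q(x) = x₁x₂ + x₃x₄` on `F_q⁴`. -/
def Q4 (q : ℕ) (x : Fin 4 → ZMod q) : ZMod q := x 0 * x 1 + x 2 * x 3

/-- The vectors `v_α` (`α ∈ F_q ∪ {∞}`, with `none` playing the role of `∞`):
`v_∞ = e₄` and `v_α = e₂ + αe₄`. -/
def vvec (q : ℕ) : Option (ZMod q) → (Fin 4 → ZMod q)
  | none => ![0, 0, 0, 1]
  | some a => ![0, 1, 0, a]

/-- The vectors `u_α`: `u_∞ = e₁` and `u_α = αe₁ − e₃`. -/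
def uvec (q : ℕ) : Option (ZMod q) → (Fin 4 → ZMod q)
  | none => ![1, 0, 0, 0]
  | some a => ![a, 0, -1, 0]

/-- The subspace `U_α = span{v_α, u_α}` of `F_q⁴`. -/
def Usub (q : ℕ) [Fact q.Prime] (α : Option (ZMod q)) :
    Submodule (ZMod q) (Fin 4 → ZMod q) :=
  Submodule.span (ZMod q) {vvec q α, uvec q α}

/-! In coordinates, `U_∞ = {x₂ = x₃ = 0}` and `U_a = {x₁ = -a x₃, x₄ = a x₂}`; on each of these
`Q` vanishes identically. A singular `x` lies in `U_∞` if `x₂ = x₃ = 0`, and otherwise in `U_a`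
with `a = x₄ / x₂` (when `x₃ = 0`, forcing `x₁ = 0`) or `a = -x₁ / x₃`. Two of these coordinate
descriptions with different parameters leave only `x = 0`. -/

section

variable (q : ℕ) [Fact q.Prime]

lemma mem_Usub_none (x : Fin 4 → ZMod q) : x ∈ Usub q none ↔ x 1 = 0 ∧ x 2 = 0 := by
  rw [Usub, Submodule.mem_span_pair]
  constructor
  · rintro ⟨c, d, rfl⟩
    simp [vvec, uvec]
  · rintro ⟨h1, h2⟩
    refine ⟨x 3, x 0, funext fun i => ?_⟩
    fin_cases i <;> simp [vvec, uvec, h1, h2]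

lemma mem_Usub_some (a : ZMod q) (x : Fin 4 → ZMod q) :
    x ∈ Usub q (some a) ↔ x 0 = -(a * x 2) ∧ x 3 = a * x 1 := by
  rw [Usub, Submodule.mem_span_pair]
  constructor
  · rintro ⟨c, d, rfl⟩
    constructor <;> simp [vvec, uvec] <;> ring
  · rintro ⟨h1, h2⟩
    refine ⟨x 1, -x 2, funext fun i => ?_⟩
    fin_cases i <;> simp [vvec, uvec, h1, h2] <;> ring

lemma linearIndependent_vvec_uvec (α : Option (ZMod q)) :
    LinearIndependent (ZMod q) ![vvec q α, uvec q α] := by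
  rw [LinearIndependent.pair_iff]
  intro s t hst
  cases α with
  | none =>
    have h0 := congrFun hst 0
    have h3 := congrFun hst 3
    simp [vvec, uvec] at h0 h3
    exact ⟨h3, h0⟩
  | some a =>
    have h1 := congrFun hst 1
    have h2 := congrFun hst 2
    simp [vvec, uvec] at h1 h2
    exact ⟨h1, h2⟩

lemma finrank_Usub (α : Option (ZMod q)) : Module.finrank (ZMod q) (Usub q α) = 2 := by
  have h := finrank_span_eq_card (linearIndependent_vvec_uvec q α)
  rwa [Matrix.range_cons, Matrix.range_cons, Matrix.range_empty, Set.union_empty,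
    Set.singleton_union, Fintype.card_fin] at h

lemma Q4_eq_zero_of_mem_Usub {α : Option (ZMod q)} {x : Fin 4 → ZMod q} (hx : x ∈ Usub q α) :
    Q4 q x = 0 := by
  cases α with
  | none =>
    rw [mem_Usub_none] at hx
    simp [Q4, hx.1, hx.2]
  | some a =>
    rw [mem_Usub_some] at hx
    rw [Q4, hx.1, hx.2]
    ring

lemma Usub_none_inf_Usub_some (b : ZMod q) : Usub q none ⊓ Usub q (some b) = ⊥ := by
  refine (Submodule.eq_bot_iff _).2 fun x hxy => ?_
  obtain ⟨hx, hy⟩ := Submodule.mem_inf.1 hxy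
  rw [mem_Usub_none] at hx
  rw [mem_Usub_some] at hy
  funext i
  fin_cases i <;> simp [hx.1, hx.2, hy.1, hy.2]

lemma Usub_some_inf_Usub_some {a b : ZMod q} (hab : a ≠ b) :
    Usub q (some a) ⊓ Usub q (some b) = ⊥ := by
  refine (Submodule.eq_bot_iff _).2 fun x hxy => ?_
  obtain ⟨hx, hy⟩ := Submodule.mem_inf.1 hxy
  rw [mem_Usub_some] at hx hy
  have hab' : a - b ≠ 0 := sub_ne_zero.2 hab
  have h1 : x 1 = 0 :=
    (mul_eq_zero.1 (by linear_combination hy.2 - hx.2 : (a - b) * x 1 = 0)).resolve_left hab'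
  have h2 : x 2 = 0 :=
    (mul_eq_zero.1 (by linear_combination hx.1 - hy.1 : (a - b) * x 2 = 0)).resolve_left hab'
  funext i
  fin_cases i <;> simp [hx.1, hx.2, h1, h2]

lemma Usub_inf_Usub {α β : Option (ZMod q)} (hne : α ≠ β) : Usub q α ⊓ Usub q β = ⊥ := by
  match α, β with
  | none, none => exact absurd rfl hne
  | none, some b => exact Usub_none_inf_Usub_some q b
  | some a, none => rw [inf_comm]; exact Usub_none_inf_Usub_some q a
  | some a, some b => exact Usub_some_inf_Usub_some q (Option.some_injective _ |>.ne_iff.1 hne)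

lemma exists_mem_Usub_of_Q4_eq_zero {x : Fin 4 → ZMod q} (hQ : Q4 q x = 0) :
    ∃ α, x ∈ Usub q α := by
  rw [Q4] at hQ
  by_cases h2 : x 2 = 0
  · by_cases h1 : x 1 = 0
    · exact ⟨none, (mem_Usub_none q x).2 ⟨h1, h2⟩⟩
    · have h0 : x 0 = 0 := by simpa [h1, h2] using hQ
      refine ⟨some (x 3 / x 1), (mem_Usub_some q _ x).2 ⟨?_, ?_⟩⟩
      · simp [h0, h2]
      · rw [div_mul_cancel₀ _ h1]
  · refine ⟨some (-x 0 / x 2), (mem_Usub_some q _ x).2 ⟨?_, ?_⟩⟩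
    · field_simp
    · field_simp
      linear_combination hQ

end

theorem stmt16_general (q : ℕ) [Fact q.Prime] :
    (∀ α β : Option (ZMod q), α ≠ β → Usub q α ⊓ Usub q β = ⊥) ∧
    (∀ α : Option (ZMod q), Module.finrank (ZMod q) (Usub q α) = 2) ∧
    (∀ α : Option (ZMod q), ∀ x ∈ Usub q α, x ≠ 0 → Q4 q x = 0) ∧
    (∀ x : Fin 4 → ZMod q, x ≠ 0 → (Q4 q x = 0 ↔ ∃ α, x ∈ Usub q α)) :=
  ⟨fun _ _ => Usub_inf_Usub q, finrank_Usub q, fun _ _ hx _ => Q4_eq_zero_of_mem_Usub q hx,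
    fun _ _ => ⟨exists_mem_Usub_of_Q4_eq_zero q, fun ⟨_, hx⟩ => Q4_eq_zero_of_mem_Usub q hx⟩⟩

/-- the `q+1` two-dimensional subspaces `U_α` pairwise intersect trivially,
consist of singular vectors of `Q(x) = x₁x₂ + x₃x₄`, and their nonzero vectors partition the
set of nonzero singular vectors. -/
theorem stmt16 (q : ℕ) [Fact q.Prime] (hodd : Odd q) :
    (∀ α β : Option (ZMod q), α ≠ β → Usub q α ⊓ Usub q β = ⊥) ∧
    (∀ α : Option (ZMod q), Module.finrank (ZMod q) (Usub q α) = 2) ∧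
    (∀ α : Option (ZMod q), ∀ x ∈ Usub q α, x ≠ 0 → Q4 q x = 0) ∧
    (∀ x : Fin 4 → ZMod q, x ≠ 0 → (Q4 q x = 0 ↔ ∃ α, x ∈ Usub q α)) :=
  stmt16_general q
end

section
/- Let V be the elementary abelian group F_q^{n}, D ⊆ V a subset, and G ≤ AGL(n,q) a group of affine transformations [M,x]: v ↦ vM + x acting regularly on V such that MD = D for every [M,x] ∈ G (i.e., D is invariant under the linear parts). Then the Cayley graph Cay(G, D′), where D′ = {[M,x] ∈ G : x ∈ D}, is isomorphic to the Cayley graph Cay(V, D). In particular, if D is a regular (q^n,k,λ,μ)-PDS in (V,+) with D inverse-closed (D = −D, 0 ∉ D), then D′ is a regular (q^n,k,λ,μ)-PDS in G. -/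
open Finset Matrix

/-- Number of ways to write `x` as `d₁ − d₂` with `d₁, d₂ ∈ D`. -/
def pdsCountAdd {V : Type*} [AddGroup V] [Fintype V] [DecidableEq V]
    (D : Finset V) (x : V) : ℕ :=
  ((D ×ˢ D).filter (fun p => p.1 - p.2 = x)).card

/-- `D` is a regular `(v,k,λ,μ)`-partial difference set in the additive group `V`. -/
def IsRegularAddPDS {V : Type*} [AddGroup V] [Fintype V] [DecidableEq V]
    (D : Finset V) (v k l m : ℤ) : Prop :=
  (Fintype.card V : ℤ) = v ∧ (D.card : ℤ) = k ∧ (0 : V) ∉ D ∧ (∀ d ∈ D, -d ∈ D) ∧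
  (∀ x ∈ D, (pdsCountAdd D x : ℤ) = l) ∧
  (∀ x : V, x ≠ 0 → x ∉ D → (pdsCountAdd D x : ℤ) = m)

/-- let `G` be a group of affine transformations `[M,x] : v ↦ vM + x` of
`V = F_q^n` (given by its linear parts `M g` and translation parts `τ g`) acting regularly
on `V`, with `D ⊆ V` invariant under all linear parts.  Then `Cay(G, D')` with
`D' = {g : τ g ∈ D}` is isomorphic to `Cay(V, D)`; in particular, if `D` is a regular
`(qⁿ,k,λ,μ)`-PDS in `(V,+)` then `D'` is a regular `(qⁿ,k,λ,μ)`-PDS in `G`. -/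
theorem stmt17 {F : Type*} [Field F] [Fintype F] [DecidableEq F] (q n : ℕ)
    (hq : Fintype.card F = q)
    (G : Type*) [Group G] [Fintype G] [DecidableEq G]
    (M : G → Matrix (Fin n) (Fin n) F) (τ : G → (Fin n → F))
    (hM1 : M 1 = 1) (hτ1 : τ 1 = 0)
    (hMmul : ∀ g h : G, M (g * h) = M g * M h)
    (hτmul : ∀ g h : G, τ (g * h) = Matrix.vecMul (τ g) (M h) + τ h)
    (hreg : ∀ w z : Fin n → F, ∃! g : G, Matrix.vecMul w (M g) + τ g = z)
    (D : Finset (Fin n → F))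
    (hinvD : ∀ g : G, D.image (fun d => Matrix.vecMul d (M g)) = D) :
    (∃ e : G ≃ (Fin n → F), ∀ g h : G,
      g * h⁻¹ ∈ Finset.univ.filter (fun g' : G => τ g' ∈ D) ↔ e g - e h ∈ D) ∧
    (∀ k l m : ℤ, IsRegularAddPDS D ((q : ℤ) ^ n) k l m →
      IsRegularPDS (Finset.univ.filter (fun g : G => τ g ∈ D)) ((q : ℤ) ^ n) k l m) := by

  classical
  -- τ is bijective
  have hτbij : Function.Bijective τ := by
    constructor
    · intro g h hgh
      obtain ⟨u, -, hu⟩ := hreg 0 (τ g)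
      have h1 : Matrix.vecMul (0 : Fin n → F) (M g) + τ g = τ g := by
        simp [Matrix.zero_vecMul]
      have h2 : Matrix.vecMul (0 : Fin n → F) (M h) + τ h = τ g := by
        simp [Matrix.zero_vecMul, hgh]
      rw [hu g h1, hu h h2]
    · intro z
      obtain ⟨u, hu, -⟩ := hreg 0 z
      exact ⟨u, by simpa [Matrix.zero_vecMul] using hu⟩
  have memD : ∀ (g : G) (a : Fin n → F), a ∈ D ↔ Matrix.vecMul a (M g) ∈ D := by
    intro g a
    constructor
    · intro ha
      rw [show D = Finset.image (fun d => Matrix.vecMul d (M g)) D from (hinvD g).symm]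
      exact Finset.mem_image_of_mem _ ha
    · intro ha
      have h2 := Finset.mem_image_of_mem (fun d => Matrix.vecMul d (M g⁻¹)) ha
      rw [hinvD g⁻¹] at h2
      simpa [Matrix.vecMul_vecMul, ← hMmul, hM1] using h2
  -- τ of inverse
  have hτinv : ∀ g : G, Matrix.vecMul (τ g) (M g⁻¹) = -τ g⁻¹ := by
    intro g
    have := hτmul g g⁻¹
    rw [mul_inv_cancel, hτ1] at this
    linear_combination (norm := module) -this
  set D' : Finset G := Finset.univ.filter (fun g : G => τ g ∈ D) with hD'
  have memD' : ∀ g : G, g ∈ D' ↔ τ g ∈ D := by intro g; simp [hD']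
  -- the isomorphism condition
  have hiso : ∀ g h : G, g * h⁻¹ ∈ D' ↔ τ g - τ h ∈ D := by
    intro g h
    have hg : g = (g * h⁻¹) * h := by group
    have hτg : τ g = Matrix.vecMul (τ (g * h⁻¹)) (M h) + τ h := by
      conv_lhs => rw [hg, hτmul]
    have hdiff : τ g - τ h = Matrix.vecMul (τ (g * h⁻¹)) (M h) := by
      rw [hτg]; abel
    rw [memD', hdiff]
    exact memD h (τ (g * h⁻¹))
  -- count transfer
  have hcount : ∀ x : G, pdsCount D' x = pdsCountAdd D (τ x) := by
    intro x
    unfold pdsCount pdsCountAdd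
    apply Finset.card_bij
      (fun p _ => (Matrix.vecMul (τ p.1) (M p.2⁻¹), Matrix.vecMul (τ p.2) (M p.2⁻¹)))
    · rintro ⟨d1, d2⟩ hp
      simp only [Finset.mem_filter, Finset.mem_product, memD'] at hp ⊢
      obtain ⟨⟨h1, h2⟩, h3⟩ := hp
      refine ⟨⟨(memD d2⁻¹ (τ d1)).1 h1, (memD d2⁻¹ (τ d2)).1 h2⟩, ?_⟩
      have hxd2 : x * d2 = d1 := by rw [← h3]; group
      have hd1 : τ d1 = Matrix.vecMul (τ x) (M d2) + τ d2 := by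
        rw [← hxd2, hτmul]
      rw [hd1]
      have : Matrix.vecMul (Matrix.vecMul (τ x) (M d2) + τ d2) (M d2⁻¹)
          = Matrix.vecMul (τ x) (M d2 * M d2⁻¹) + Matrix.vecMul (τ d2) (M d2⁻¹) := by
        rw [Matrix.add_vecMul, Matrix.vecMul_vecMul]
      rw [this, ← hMmul, mul_inv_cancel, hM1, Matrix.vecMul_one]
      abel
    · rintro ⟨d1, d2⟩ hp ⟨e1, e2⟩ hq heq
      simp only [Finset.mem_filter, Finset.mem_product] at hp hq
      have h2 : Matrix.vecMul (τ d2) (M d2⁻¹) = Matrix.vecMul (τ e2) (M e2⁻¹) := congrArg Prod.snd heq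
      rw [hτinv, hτinv] at h2
      have h2' : d2⁻¹ = e2⁻¹ := hτbij.1 (neg_injective h2)
      have h2'' : d2 = e2 := inv_injective h2'
      have h1 : d1 = e1 := by
        have := hp.2; have h4 := hq.2
        rw [← h4, h2''] at this
        exact mul_right_cancel this
      rw [h1, h2'']
    · rintro ⟨a, b⟩ hab
      simp only [Finset.mem_filter, Finset.mem_product] at hab
      obtain ⟨⟨ha, hb⟩, hab'⟩ := hab
      obtain ⟨h, hh⟩ := hτbij.2 (-b)
      set d2 := h⁻¹ with hd2
      have hτd2 : τ d2 = Matrix.vecMul b (M d2) := by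
        have := hτinv h
        rw [hh, Matrix.neg_vecMul] at this
        have := neg_injective this
        rw [← this]
      set d1 := x * d2 with hd1def
      have hτd1 : τ d1 = Matrix.vecMul a (M d2) := by
        have ha' : a = τ x + b := by
          rw [← hab']; abel
        rw [hd1def, hτmul, hτd2, ha', Matrix.add_vecMul]
      have hMd2 : ∀ v : Fin n → F, Matrix.vecMul (Matrix.vecMul v (M d2)) (M d2⁻¹) = v := by
        intro v
        rw [Matrix.vecMul_vecMul, ← hMmul, mul_inv_cancel, hM1, Matrix.vecMul_one]
      refine ⟨(d1, d2), ?_, ?_⟩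
      · simp only [Finset.mem_filter, Finset.mem_product, memD']
        refine ⟨⟨?_, ?_⟩, by rw [hd1def]; group⟩
        · rw [hτd1]; exact (memD d2 a).1 ha
        · rw [hτd2]; exact (memD d2 b).1 hb
      · simp only [hτd1, hτd2, hMd2]
  obtain ⟨hmk, hmax⟩ := hτbij
  refine ⟨⟨Equiv.ofBijective τ ⟨hmk, hmax⟩, fun g h => ?_⟩, ?_⟩
  · simpa [Equiv.ofBijective] using hiso g h
  · rintro k l m ⟨hv, hk, h0, hinv, hl, hm⟩
    have hcardD : D'.card = D.card := by
      apply Finset.card_bij (fun g _ => τ g)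
      · intro g hg; exact (memD' g).1 hg
      · intro g _ h _ hgh; exact hmk hgh
      · intro b hb
        obtain ⟨g, hg⟩ := hmax b
        exact ⟨g, (memD' g).2 (by rw [hg]; exact hb), hg⟩
    refine ⟨?_, ?_, ?_, ?_, ?_, ?_⟩
    · rw [Fintype.card_of_bijective ⟨hmk, hmax⟩]; exact hv
    · rw [hcardD]; exact hk
    · simp only [memD', hτ1]; exact h0
    · intro g hg
      rw [memD'] at hg ⊢
      have h1 : Matrix.vecMul (τ g) (M g⁻¹) ∈ D := (memD g⁻¹ (τ g)).1 hg
      rw [hτinv g] at h1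
      simpa using hinv _ h1
    · intro x hx
      rw [hcount x]
      exact hl (τ x) ((memD' x).1 hx)
    · intro x hx1 hxD
      rw [hcount x]
      refine hm (τ x) ?_ (fun h => hxD ((memD' x).2 h))
      intro h
      exact hx1 (hmk (by rw [h, hτ1]))
end

section
/- Let p be an odd prime and G = ⟨x, y : x^{p²} = y^{p²} = 1, yxy⁻¹ = x^{p²−p+1}⟩. Then for any integers a, b, the element (x^a y^b)^p equals x^{pa'} y^{pb} for some integer a′ with a′ ≡ a (mod p); consequently every element of order dividing p in G lies in the subgroup ⟨x^p, y^p⟩, and G has exactly p² − 1 elements of order p. -/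
open Finset

/-- in `G = ⟨x,y : x^{p²} = y^{p²} = 1, yxy⁻¹ = x^{p²−p+1}⟩` (axiomatized as a
group of order `p⁴` generated by two such elements), `(x^a y^b)^p = x^{pa'} y^{pb}` with
`a' ≡ a (mod p)`; consequently every element of order dividing `p` lies in `⟨x^p, y^p⟩`, and
`G` has exactly `p² − 1` elements of order `p`. -/
theorem stmt19 (p : ℕ) (hp : p.Prime) (hodd : Odd p)
    (G : Type*) [Group G] [Fintype G] [DecidableEq G] (x y : G)
    (hx : x ^ (p ^ 2) = 1) (hy : y ^ (p ^ 2) = 1)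
    (hconj : y * x * y⁻¹ = x ^ (p ^ 2 - p + 1))
    (hgen : Subgroup.closure ({x, y} : Set G) = ⊤)
    (hcard : Fintype.card G = p ^ 4) :
    (∀ a b : ℤ, ∃ a' : ℤ,
      (x ^ a * y ^ b) ^ p = x ^ ((p : ℤ) * a') * y ^ ((p : ℤ) * b) ∧
        a' ≡ a [ZMOD (p : ℤ)]) ∧
    (∀ g : G, g ^ p = 1 → g ∈ Subgroup.closure ({x ^ p, y ^ p} : Set G)) ∧
    (Finset.univ.filter (fun g : G => orderOf g = p)).card = p ^ 2 - 1 := by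
  haveI : Fact p.Prime := ⟨hp⟩
  haveI : NeZero p := ⟨hp.ne_zero⟩
  haveI : NeZero (p ^ 2) := ⟨pow_ne_zero 2 hp.ne_zero⟩
  set m : ℕ := p ^ 2 - p + 1 with hm
  have hple : p ≤ p ^ 2 := Nat.le_self_pow two_ne_zero p
  -- exponent-reduction lemmas
  have hxmod : ∀ u v : ℕ, u ≡ v [MOD p ^ 2] → x ^ u = x ^ v := by
    intro u v h
    exact pow_eq_pow_iff_modEq.mpr (h.of_dvd (orderOf_dvd_of_pow_eq_one hx))
  have hymod : ∀ u v : ℕ, u ≡ v [MOD p ^ 2] → y ^ u = y ^ v := by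
    intro u v h
    exact pow_eq_pow_iff_modEq.mpr (h.of_dvd (orderOf_dvd_of_pow_eq_one hy))
  -- basic commutation
  have h1 : y * x = x ^ m * y := by
    rw [mul_inv_eq_iff_eq_mul] at hconj; exact hconj
  have hyx : ∀ n : ℕ, y * x ^ n = x ^ (n * m) * y := by
    intro n
    induction n with
    | zero => simp
    | succ n ih =>
      calc y * x ^ (n + 1) = (y * x ^ n) * x := by rw [pow_succ x n, mul_assoc]
        _ = x ^ (n * m) * (y * x) := by rw [ih, mul_assoc]
        _ = x ^ (n * m) * (x ^ m * y) := by rw [h1]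
        _ = x ^ ((n + 1) * m) * y := by rw [← mul_assoc, ← pow_add]; ring_nf
  have hycx : ∀ c n : ℕ, y ^ c * x ^ n = x ^ (n * m ^ c) * y ^ c := by
    intro c
    induction c with
    | zero => simp
    | succ c ih =>
      intro n
      calc y ^ (c + 1) * x ^ n = y ^ c * (y * x ^ n) := by
            rw [pow_succ y c, mul_assoc]
        _ = y ^ c * x ^ (n * m) * y := by rw [hyx, ← mul_assoc]
        _ = x ^ (n * m * m ^ c) * (y ^ c * y) := by rw [ih, mul_assoc]
        _ = x ^ (n * m ^ (c + 1)) * y ^ (c + 1) := by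
            rw [← pow_succ y c, pow_succ m c, Nat.mul_comm (m ^ c) m, ← Nat.mul_assoc]
  -- core power formula
  have hkey0 : ∀ a b k : ℕ, (x ^ a * y ^ b) ^ k =
      x ^ (a * ∑ j ∈ range k, m ^ (b * j)) * y ^ (b * k) := by
    intro a b k
    induction k with
    | zero => simp
    | succ k ih =>
      calc (x ^ a * y ^ b) ^ (k + 1)
          = x ^ (a * ∑ j ∈ range k, m ^ (b * j)) * y ^ (b * k) * (x ^ a * y ^ b) := by
            rw [pow_succ (x ^ a * y ^ b) k, ih]
        _ = x ^ (a * ∑ j ∈ range k, m ^ (b * j)) * (y ^ (b * k) * x ^ a) * y ^ b := by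
            rw [mul_assoc, mul_assoc, mul_assoc]
        _ = x ^ (a * ∑ j ∈ range k, m ^ (b * j)) * (x ^ (a * m ^ (b * k)) * y ^ (b * k)) * y ^ b := by
            rw [hycx]
        _ = x ^ (a * ∑ j ∈ range k, m ^ (b * j) + a * m ^ (b * k)) * (y ^ (b * k) * y ^ b) := by
            rw [pow_add, mul_assoc, mul_assoc, mul_assoc]
        _ = x ^ (a * ∑ j ∈ range (k + 1), m ^ (b * j)) * y ^ (b * (k + 1)) := by
            rw [Finset.sum_range_succ, Nat.mul_add, Nat.mul_succ, pow_add y]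
  -- arithmetic: m ^ c ≡ 1 - c p mod p², and the geometric sum ≡ p
  have hp2cast : ((p : ZMod (p ^ 2))) ^ 2 = 0 := by
    rw [← Nat.cast_pow, ZMod.natCast_self]
  have hmcast : (m : ZMod (p ^ 2)) = 1 - p := by
    rw [hm, Nat.cast_add, Nat.cast_sub hple, Nat.cast_pow, Nat.cast_one, hp2cast]
    ring
  have hpp : (p : ZMod (p ^ 2)) * p = 0 := by
    have : ((p * p : ℕ) : ZMod (p ^ 2)) = 0 := by
      rw [ZMod.natCast_eq_zero_iff]; exact ⟨1, by ring⟩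
    push_cast at this; exact this
  have hmc : ∀ c : ℕ, ((m ^ c : ℕ) : ZMod (p ^ 2)) = 1 - c * p := by
    intro c
    induction c with
    | zero => simp
    | succ c ih =>
      rw [pow_succ m c, Nat.cast_mul, ih, hmcast]
      push_cast
      linear_combination (c : ZMod (p ^ 2)) * hpp
  have hSum : ∀ b : ℕ, ((∑ j ∈ range p, m ^ (b * j) : ℕ) : ZMod (p ^ 2)) = p := by
    intro b
    obtain ⟨t, ht⟩ := hodd
    have hgauss : (∑ j ∈ range p, j) = p * t := by
      have h2 : (∑ j ∈ range p, j) * 2 = p * (p - 1) := Finset.sum_range_id_mul_two p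
      have : p - 1 = 2 * t := by omega
      rw [this] at h2
      have h3 : p * (2 * t) = p * t * 2 := by ring
      omega
    push_cast
    have : ∀ j ∈ range p, ((m ^ (b * j) : ℕ) : ZMod (p ^ 2)) = 1 - (b * j : ℕ) * p :=
      fun j _ => hmc (b * j)
    push_cast at this
    rw [Finset.sum_congr rfl this, Finset.sum_sub_distrib]
    simp only [Finset.sum_const, Finset.card_range, nsmul_eq_mul, mul_one]
    have hsj : ((∑ j ∈ range p, j : ℕ) : ZMod (p ^ 2)) = (p : ZMod (p ^ 2)) * t := by
      rw [hgauss]; push_cast; ring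
    have hsum2 : (∑ j ∈ range p, ((b : ZMod (p ^ 2)) * j * p))
        = (b : ZMod (p ^ 2)) * p * ((∑ j ∈ range p, j : ℕ)) := by
      push_cast [Finset.mul_sum]
      exact Finset.sum_congr rfl fun j _ => by ring
    rw [hsum2, hsj]
    linear_combination (-((b : ZMod (p ^ 2)) * t)) * hpp
  -- the key p-th power formula over ℕ
  have hkey : ∀ a b : ℕ, (x ^ a * y ^ b) ^ p = x ^ (p * a) * y ^ (p * b) := by
    intro a b
    rw [hkey0 a b p]
    have hS : (∑ j ∈ range p, m ^ (b * j)) ≡ p [MOD p ^ 2] := by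
      rw [← ZMod.natCast_eq_natCast_iff]; exact hSum b
    rw [hxmod _ (a * p) (hS.mul_left a), mul_comm a p, mul_comm b p]
  -- every element has normal form x^a y^b
  have hp2pos : 0 < p ^ 2 := pow_pos hp.pos 2
  have hsucc : p ^ 2 - 1 + 1 = p ^ 2 := Nat.succ_pred_eq_of_pos hp2pos
  have hxinv : x⁻¹ = x ^ (p ^ 2 - 1) := by
    apply inv_eq_of_mul_eq_one_right
    rw [← pow_succ' x (p ^ 2 - 1), hsucc]; exact hx
  have hyinv : y⁻¹ = y ^ (p ^ 2 - 1) := by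
    apply inv_eq_of_mul_eq_one_right
    rw [← pow_succ' y (p ^ 2 - 1), hsucc]; exact hy
  have hall : ∀ g : G, ∃ a b : ℕ, g = x ^ a * y ^ b := by
    have hH : ∀ g ∈ Subgroup.closure ({x, y} : Set G), ∃ a b : ℕ, g = x ^ a * y ^ b := by
      intro g hg
      induction hg using Subgroup.closure_induction with
      | mem z hz =>
        rcases hz with rfl | rfl
        · exact ⟨1, 0, by simp⟩
        · exact ⟨0, 1, by simp⟩
      | one => exact ⟨0, 0, by simp⟩
      | mul u v _ _ hu hv =>
        obtain ⟨a, b, rfl⟩ := hu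
        obtain ⟨c, d, rfl⟩ := hv
        refine ⟨a + c * m ^ b, b + d, ?_⟩
        rw [pow_add, pow_add, mul_assoc, ← mul_assoc (y ^ b), hycx b c,
          mul_assoc, ← mul_assoc, ← pow_add]
      | inv u _ hu =>
        obtain ⟨a, b, rfl⟩ := hu
        refine ⟨(p ^ 2 - 1) * a * m ^ ((p ^ 2 - 1) * b), (p ^ 2 - 1) * b, ?_⟩
        rw [mul_inv_rev, ← inv_pow, ← inv_pow, hxinv, hyinv, ← pow_mul, ← pow_mul]
        exact hycx _ _
    intro g
    exact hH g (hgen ▸ Subgroup.mem_top g)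
  -- uniqueness of normal form via cardinality
  set f : ZMod (p ^ 2) × ZMod (p ^ 2) → G := fun ab => x ^ ab.1.val * y ^ ab.2.val with hf
  have hfval : ∀ a b : ℕ, f ((a : ZMod (p ^ 2)), (b : ZMod (p ^ 2))) = x ^ a * y ^ b := by
    intro a b
    simp only [hf]
    rw [ZMod.val_natCast, ZMod.val_natCast,
      hxmod _ a (Nat.mod_modEq a _), hymod _ b (Nat.mod_modEq b _)]
  have hfsurj : Function.Surjective f := by
    intro g
    obtain ⟨a, b, rfl⟩ := hall g
    exact ⟨((a : ZMod (p ^ 2)), (b : ZMod (p ^ 2))), hfval a b⟩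
  have hfinj : Function.Injective f := by
    have hcards : Fintype.card (ZMod (p ^ 2) × ZMod (p ^ 2)) = Fintype.card G := by
      rw [Fintype.card_prod, ZMod.card, hcard]; ring
    exact ((Fintype.bijective_iff_surjective_and_card f).mpr ⟨hfsurj, hcards⟩).1
  have huniq : ∀ a b : ℕ, x ^ a * y ^ b = 1 → p ^ 2 ∣ a ∧ p ^ 2 ∣ b := by
    intro a b hab
    have h0 : f ((a : ZMod (p ^ 2)), (b : ZMod (p ^ 2)))
        = f ((0 : ZMod (p ^ 2)), (0 : ZMod (p ^ 2))) := by
      rw [hfval a b, hab]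
      simp only [hf, ZMod.val_zero, pow_zero, mul_one]
    have := hfinj h0
    rw [Prod.ext_iff] at this
    constructor
    · rw [← ZMod.natCast_eq_zero_iff]; exact this.1
    · rw [← ZMod.natCast_eq_zero_iff]; exact this.2
  -- part 2
  have part2 : ∀ g : G, g ^ p = 1 → ∃ a₁ b₁ : ℕ, g = x ^ (p * a₁) * y ^ (p * b₁) := by
    intro g hg
    obtain ⟨a, b, rfl⟩ := hall g
    rw [hkey a b] at hg
    obtain ⟨hda, hdb⟩ := huniq _ _ hg
    have hpa : p ∣ a := by
      rcases hda with ⟨c, hc⟩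
      exact ⟨c, Nat.eq_of_mul_eq_mul_left hp.pos (by rw [hc]; ring)⟩
    have hpb : p ∣ b := by
      rcases hdb with ⟨c, hc⟩
      exact ⟨c, Nat.eq_of_mul_eq_mul_left hp.pos (by rw [hc]; ring)⟩
    obtain ⟨a₁, rfl⟩ := hpa
    obtain ⟨b₁, rfl⟩ := hpb
    exact ⟨a₁, b₁, rfl⟩
  have part2' : ∀ g : G, g ^ p = 1 → g ∈ Subgroup.closure ({x ^ p, y ^ p} : Set G) := by
    intro g hg
    obtain ⟨a₁, b₁, rfl⟩ := part2 g hg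
    rw [pow_mul, pow_mul]
    exact Subgroup.mul_mem _
      (Subgroup.pow_mem _ (Subgroup.subset_closure (by simp)) a₁)
      (Subgroup.pow_mem _ (Subgroup.subset_closure (by simp)) b₁)
  -- counting elements with g^p = 1
  have hTcard : (univ.filter (fun g : G => g ^ p = 1)).card = p ^ 2 := by
    set e : ZMod p × ZMod p → G := fun ab => x ^ (p * ab.1.val) * y ^ (p * ab.2.val) with he
    have hinj : Function.Injective e := by
      intro a₁ a₂ h
      simp only [he] at h
      have h1 : f ((p * a₁.1.val : ℕ), (p * a₁.2.val : ℕ))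
          = f ((p * a₂.1.val : ℕ), (p * a₂.2.val : ℕ)) := by
        rw [hfval, hfval]; exact h
      have h2 := hfinj h1
      rw [Prod.ext_iff] at h2
      have hmEq : ∀ u v : ZMod p, ((p * u.val : ℕ) : ZMod (p ^ 2)) = ((p * v.val : ℕ)) → u = v := by
        intro u v huv
        rw [ZMod.natCast_eq_natCast_iff] at huv
        have : u.val ≡ v.val [MOD p] := by
          refine Nat.ModEq.mul_left_cancel' hp.ne_zero ?_
          rwa [← sq] 
        have := this.eq_of_lt_of_lt u.val_lt v.val_lt
        exact ZMod.val_injective p this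
      exact Prod.ext_iff.mpr ⟨hmEq _ _ (by exact_mod_cast h2.1), hmEq _ _ (by exact_mod_cast h2.2)⟩
    have himg : univ.filter (fun g : G => g ^ p = 1) = univ.image e := by
      ext g
      simp only [mem_filter, mem_univ, true_and, Finset.mem_image]
      constructor
      · intro hg
        obtain ⟨a₁, b₁, rfl⟩ := part2 g hg
        refine ⟨((a₁ : ZMod p), (b₁ : ZMod p)), ?_⟩
        simp only [he]
        rw [ZMod.val_natCast, ZMod.val_natCast,
          hxmod (p * (a₁ % p)) (p * a₁) (((Nat.mod_modEq a₁ p).mul_left' p).of_dvd ⟨1, by ring⟩),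
          hymod (p * (b₁ % p)) (p * b₁) (((Nat.mod_modEq b₁ p).mul_left' p).of_dvd ⟨1, by ring⟩)]
      · rintro ⟨ab, rfl⟩
        simp only [he]
        rw [hkey]
        have hx' : x ^ (p * (p * ab.1.val)) = 1 := by
          rw [show p * (p * ab.1.val) = p ^ 2 * ab.1.val by ring, pow_mul, hx, one_pow]
        have hy' : y ^ (p * (p * ab.2.val)) = 1 := by
          rw [show p * (p * ab.2.val) = p ^ 2 * ab.2.val by ring, pow_mul, hy, one_pow]
        rw [hx', hy', one_mul]
    rw [himg, Finset.card_image_of_injective _ hinj]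
    simp [ZMod.card, sq]
  -- assemble
  refine ⟨?_, part2', ?_⟩
  · -- integer version
    have hxZ : ∀ u v : ℤ, u ≡ v [ZMOD ((p : ℤ) ^ 2)] → x ^ u = x ^ v := by
      intro u v h
      obtain ⟨t, ht⟩ := Int.ModEq.dvd h.symm
      have : u = v + (p : ℤ) ^ 2 * t := by linarith
      rw [this, zpow_add, zpow_mul]
      norm_cast
      rw [hx]
      simp
    have hyZ : ∀ u v : ℤ, u ≡ v [ZMOD ((p : ℤ) ^ 2)] → y ^ u = y ^ v := by
      intro u v h
      obtain ⟨t, ht⟩ := Int.ModEq.dvd h.symm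
      have : u = v + (p : ℤ) ^ 2 * t := by linarith
      rw [this, zpow_add, zpow_mul]
      norm_cast
      rw [hy]
      simp
    intro a b
    refine ⟨a, ?_, Int.ModEq.refl a⟩
    have hpos : (0 : ℤ) < (p : ℤ) ^ 2 := by exact_mod_cast hp2pos
    set a₀ : ℕ := (a % (p : ℤ) ^ 2).toNat with ha₀
    set b₀ : ℕ := (b % (p : ℤ) ^ 2).toNat with hb₀
    have ha₀' : (a₀ : ℤ) = a % (p : ℤ) ^ 2 :=
      Int.toNat_of_nonneg (Int.emod_nonneg a hpos.ne')
    have hb₀' : (b₀ : ℤ) = b % (p : ℤ) ^ 2 :=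
      Int.toNat_of_nonneg (Int.emod_nonneg b hpos.ne')
    have haeq : (a₀ : ℤ) ≡ a [ZMOD ((p : ℤ) ^ 2)] := by
      rw [ha₀']; exact Int.emod_emod_of_dvd a dvd_rfl
    have hbeq : (b₀ : ℤ) ≡ b [ZMOD ((p : ℤ) ^ 2)] := by
      rw [hb₀']; exact Int.emod_emod_of_dvd b dvd_rfl
    calc (x ^ a * y ^ b) ^ p
        = (x ^ (a₀ : ℕ) * y ^ (b₀ : ℕ)) ^ p := by
          rw [hxZ a _ haeq.symm, hyZ b _ hbeq.symm, zpow_natCast, zpow_natCast]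
      _ = x ^ (p * a₀) * y ^ (p * b₀) := hkey a₀ b₀
      _ = x ^ ((p : ℤ) * a) * y ^ ((p : ℤ) * b) := by
          have hA : ((p * a₀ : ℕ) : ℤ) ≡ (p : ℤ) * a [ZMOD ((p : ℤ) ^ 2)] := by
            push_cast; exact haeq.mul_left _
          have hB : ((p * b₀ : ℕ) : ℤ) ≡ (p : ℤ) * b [ZMOD ((p : ℤ) ^ 2)] := by
            push_cast; exact hbeq.mul_left _
          rw [← zpow_natCast x (p * a₀), ← zpow_natCast y (p * b₀), hxZ _ _ hA, hyZ _ _ hB]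
  · -- count of elements of order p
    have horder : univ.filter (fun g : G => orderOf g = p)
        = (univ.filter (fun g : G => g ^ p = 1)).erase 1 := by
      ext g
      simp only [mem_filter, mem_univ, true_and, Finset.mem_erase]
      constructor
      · intro h
        refine ⟨?_, by rw [← h]; exact pow_orderOf_eq_one g⟩
        rintro rfl
        rw [orderOf_one] at h
        exact absurd h.symm hp.one_lt.ne'
      · rintro ⟨h2, h1⟩
        exact orderOf_eq_prime h1 h2
    rw [horder, Finset.card_erase_of_mem (by simp), hTcard]
end
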